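/- Let x ∈ ℝ^n have independent components with common variance v and common mean μ, and let ε be an m×n random matrix independent of x whose entries ε_{j,i} are independent with mean 0 and variance (σ²/n)·‖W'_{j,:}‖₂². Then Var[((W'+ε)x)_j] = (1+σ²)‖W'_{j,:}‖₂² v + σ² ‖W'_{j,:}‖₂² μ². -/

import Mathlib

/-!
The summand `(W_{j,i} + ε_{j,i}) x_i` is a product of independent square-integrable factors, and
for such a product `Var[A B] = Var A · Var B + Var A · (E B)² + (E A)² · Var B`. Distinct summands
are built from disjoint blocks of the independent family, so their variances add; summing the `n`
equal contributions `σ²/n · ‖W_{j,:}‖²` produces the factor `σ²`.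
-/

open MeasureTheory ProbabilityTheory

namespace ProbabilityTheory

variable {Ω : Type*} {mΩ : MeasurableSpace Ω} {μ : Measure Ω}

lemma IndepFun.sq {X Y : Ω → ℝ} (hXY : X ⟂ᵢ[μ] Y) :
    (fun ω ↦ X ω ^ 2) ⟂ᵢ[μ] (fun ω ↦ Y ω ^ 2) :=
  hXY.comp (φ := fun x ↦ x ^ 2) (ψ := fun x ↦ x ^ 2) (by fun_prop) (by fun_prop)

lemma IndepFun.memLp_two_mul {X Y : Ω → ℝ} (hXY : X ⟂ᵢ[μ] Y) (hX : MemLp X 2 μ)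
    (hY : MemLp Y 2 μ) : MemLp (X * Y) 2 μ := by
  rw [memLp_two_iff_integrable_sq (hX.1.mul hY.1)]
  simp only [Pi.mul_apply, mul_pow]
  exact hXY.sq.integrable_mul hX.integrable_sq hY.integrable_sq

lemma integral_sq_eq_variance_add_sq [IsProbabilityMeasure μ] {X : Ω → ℝ} (hX : MemLp X 2 μ) :
    μ[X ^ 2] = Var[X; μ] + μ[X] ^ 2 := by
  rw [variance_eq_sub hX]
  ring

lemma IndepFun.variance_mul [IsProbabilityMeasure μ] {X Y : Ω → ℝ} (hXY : X ⟂ᵢ[μ] Y)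
    (hX : MemLp X 2 μ) (hY : MemLp Y 2 μ) :
    Var[X * Y; μ] = Var[X; μ] * Var[Y; μ] + Var[X; μ] * μ[Y] ^ 2 + μ[X] ^ 2 * Var[Y; μ] := by
  have hmean : μ[X * Y] = μ[X] * μ[Y] := hXY.integral_mul_eq_mul_integral hX.1 hY.1
  have hmean_sq : μ[(X * Y) ^ 2] = μ[X ^ 2] * μ[Y ^ 2] := by
    rw [mul_pow]
    exact hXY.sq.integral_mul_eq_mul_integral hX.integrable_sq.1 hY.integrable_sq.1
  rw [variance_eq_sub (hXY.memLp_two_mul hX hY), hmean_sq, hmean,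
    integral_sq_eq_variance_add_sq hX, integral_sq_eq_variance_add_sq hY]
  ring

lemma IndepFun.variance_const_add_mul [IsProbabilityMeasure μ] {E X : Ω → ℝ} (hEX : E ⟂ᵢ[μ] X)
    (hE : MemLp E 2 μ) (hX : MemLp X 2 μ) (c : ℝ) :
    Var[fun ω ↦ (c + E ω) * X ω; μ]
      = Var[E; μ] * Var[X; μ] + Var[E; μ] * μ[X] ^ 2 + (c + μ[E]) ^ 2 * Var[X; μ] := by
  have hcEX : (fun ω ↦ c + E ω) ⟂ᵢ[μ] X := hEX.comp (measurable_const_add c) measurable_id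
  have hcE_mean : μ[fun ω ↦ c + E ω] = c + μ[E] := by
    rw [integral_add (integrable_const c) (hE.integrable one_le_two)]
    simp
  have := hcEX.variance_mul ((memLp_const c).add hE) hX
  rwa [variance_const_add hE.1, hcE_mean] at this

lemma iIndepFun.variance_sum_const_add_mul [IsProbabilityMeasure μ] {ι : Type*} [Fintype ι]
    {X E : ι → Ω → ℝ} (hXE : iIndepFun (Sum.elim X E) μ) (hX : ∀ i, MemLp (X i) 2 μ)
    (hE : ∀ i, MemLp (E i) 2 μ) (c : ι → ℝ) :
    Var[fun ω ↦ ∑ i, (c i + E i ω) * X i ω; μ] = ∑ i, Var[fun ω ↦ (c i + E i ω) * X i ω; μ] := by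
  have hXE_meas : ∀ k, AEMeasurable (Sum.elim X E k) μ := by
    rintro (i | i)
    exacts [(hX i).aemeasurable, (hE i).aemeasurable]
  have hterm : ∀ i, MemLp (fun ω ↦ (c i + E i ω) * X i ω) 2 μ := fun i ↦
    ((hXE.indepFun Sum.inr_ne_inl).comp (measurable_const_add (c i)) measurable_id).memLp_two_mul
      ((memLp_const (c i)).add (hE i)) (hX i)
  have hpair : Set.Pairwise (Finset.univ : Finset ι)
      fun i k ↦ (fun ω ↦ (c i + E i ω) * X i ω) ⟂ᵢ[μ] (fun ω ↦ (c k + E k ω) * X k ω) := by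
    intro i _ k _ hik
    exact (hXE.indepFun_prodMk_prodMk₀ hXE_meas (.inl i) (.inr i) (.inl k) (.inr k)
      (by simpa using hik) Sum.inl_ne_inr Sum.inr_ne_inl (by simpa using hik)).comp
      (φ := fun p ↦ (c i + p.2) * p.1) (ψ := fun p ↦ (c k + p.2) * p.1) (by fun_prop) (by fun_prop)
  simpa only [Finset.sum_fn] using IndepFun.variance_sum (fun i _ ↦ hterm i) hpair

end ProbabilityTheory

theorem variance_perturbed_output_general
    {Ω : Type*} [MeasureSpace Ω] (μ : Measure Ω) [IsProbabilityMeasure μ]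
    (m n : ℕ) (hn : 0 < n) (W : Matrix (Fin m) (Fin n) ℝ) (j : Fin m)
    (x : Fin n → Ω → ℝ) (e : Fin n → Ω → ℝ) (v μm σ : ℝ)
    (hxL2 : ∀ i, MemLp (x i) 2 μ) (heL2 : ∀ i, MemLp (e i) 2 μ)
    (hindep : iIndepFun (Sum.elim x e) μ)
    (hxmean : ∀ i, ∫ ω, x i ω ∂μ = μm)
    (hxvar : ∀ i, variance (x i) μ = v)
    (hemean : ∀ i, ∫ ω, e i ω ∂μ = 0)
    (hevar : ∀ i, variance (e i) μ = σ ^ 2 / n * ∑ k, (W j k) ^ 2) :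
    variance (fun ω => ∑ i, (W j i + e i ω) * x i ω) μ
      = (1 + σ ^ 2) * (∑ k, (W j k) ^ 2) * v
        + σ ^ 2 * (∑ k, (W j k) ^ 2) * μm ^ 2 := by
  have hex : ∀ i, e i ⟂ᵢ[μ] x i := fun i ↦ hindep.indepFun Sum.inr_ne_inl
  have hterm : ∀ i, Var[fun ω ↦ (W j i + e i ω) * x i ω; μ]
      = σ ^ 2 / n * (∑ k, W j k ^ 2) * (v + μm ^ 2) + W j i ^ 2 * v := by
    intro i
    rw [(hex i).variance_const_add_mul (heL2 i) (hxL2 i), hevar, hxvar, hxmean, hemean]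
    ring
  rw [hindep.variance_sum_const_add_mul hxL2 heL2, Finset.sum_congr rfl fun i _ ↦ hterm i,
    Finset.sum_add_distrib, Finset.sum_const, ← Finset.sum_mul, Finset.card_univ,
    Fintype.card_fin, nsmul_eq_mul]
  field_simp
  ring

/-- Variance of the perturbed output: if the components `x i` have common mean `μm`
and variance `v`, the perturbation entries `e i` (the `j`-th row of `ε`) have mean `0`
and variance `(σ²/n)·‖W'_{j,:}‖₂²`, and all of `x i, e i` are jointly independent, then
`Var[((W'+ε)x)_j] = (1+σ²)‖W'_{j,:}‖₂² v + σ² ‖W'_{j,:}‖₂² μm²`. -/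
theorem variance_perturbed_output
    {Ω : Type*} [MeasureSpace Ω] (μ : Measure Ω) [IsProbabilityMeasure μ]
    (m n : ℕ) (hn : 0 < n) (W : Matrix (Fin m) (Fin n) ℝ) (j : Fin m)
    (x : Fin n → Ω → ℝ) (e : Fin n → Ω → ℝ) (v μm σ : ℝ)
    (hxmeas : ∀ i, Measurable (x i)) (hemeas : ∀ i, Measurable (e i))
    (hxL2 : ∀ i, MemLp (x i) 2 μ) (heL2 : ∀ i, MemLp (e i) 2 μ)
    (hindep : iIndepFun (Sum.elim x e) μ)
    (hxmean : ∀ i, ∫ ω, x i ω ∂μ = μm)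
    (hxvar : ∀ i, variance (x i) μ = v)
    (hemean : ∀ i, ∫ ω, e i ω ∂μ = 0)
    (hevar : ∀ i, variance (e i) μ = σ ^ 2 / n * ∑ k, (W j k) ^ 2) :
    variance (fun ω => ∑ i, (W j i + e i ω) * x i ω) μ
      = (1 + σ ^ 2) * (∑ k, (W j k) ^ 2) * v
        + σ ^ 2 * (∑ k, (W j k) ^ 2) * μm ^ 2 :=
  variance_perturbed_output_general μ m n hn W j x e v μm σ hxL2 heL2 hindep hxmean hxvar hemean
    hevar
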